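/- Let R be a commutative ring, f ≥ 3, and x_1,…,x_f, x'_1,…,x'_f ∈ R. In the polynomial ring R[Z^{(j)}_{r;i_1,…,i_r}] with variables indexed by 2 ≤ r ≤ f, 1 ≤ j ≤ r−1 and 1 ≤ i_1 < ⋯ < i_r ≤ f, define: for r = 2 the constants s^{(1)}_{2;i_1,i_2} = x_{i_1} x'_{i_2} − x'_{i_1} x_{i_2}, and for r ≥ 3 the polynomials s^{(j)}_{r;i_1,…,i_r} = Σ_{u=1}^{r} (−1)^{u−1} ( x_{i_u} Z^{(j)}_{r−1;i_1,…,î_u,…,i_r} + x'_{i_u} Z^{(j−1)}_{r−1;i_1,…,î_u,…,i_r} ), where î_u means the index i_u is omitted and Z^{(j)}_{r−1;…} is replaced by 0 whenever j ≤ 0 or j ≥ r−1+1. Then for every 3 ≤ r ≤ f, every 1 ≤ j ≤ r−1 and every 1 ≤ i_1 < ⋯ < i_r ≤ f, substituting each variable Z^{(j')}_{r−1;i'_1,…,i'_{r−1}} by the value s^{(j')}_{r−1;i'_1,…,i'_{r−1}} in s^{(j)}_{r;i_1,…,i_r} yields 0 in R[Z]. -/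

import Mathlib

/-!
Write `d` for the operator
`(d F)^{(j)}_{i} = Σ_u (−1)^u (x_{i_u} F^{(j)}_{i∖i_u} + x'_{i_u} F^{(j−1)}_{i∖i_u})`.
For `r ≥ 3` we have `s_r = d Z_{r−1}` by definition, and the constants `s_2` are `d` of the
level-one family `Z^{(1)}_{1;k} = x'_k`. Substituting `s` for `Z` therefore turns `s_r` into
`d (d G)`, which vanishes: deleting positions `a` and `b` in either order gives the same tuple,
the same coefficient `x_a x_b F^{(j)} + (x_a x'_b + x'_a x_b) F^{(j−1)} + x'_a x'_b F^{(j−2)}`,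
and opposite signs.
-/

noncomputable section

namespace Stmt8

open MvPolynomial

/-- Index type for the variables `Z^{(j)}_{r; i_1,…,i_r}`: a level `r`, a
superscript `j`, and an `r`-tuple of indices. -/
abbrev ENidx : Type := Σ r : ℕ, ℕ × (Fin r → ℕ)

/-- The variable `Z^{(j)}_{m; i}`, replaced by `0` when the superscript `j` is
out of the valid range `1 ≤ j ≤ m − 1`. -/
def Zt (R : Type) [CommRing R] (m j : ℕ) (i : Fin m → ℕ) : MvPolynomial ENidx R :=
  if 1 ≤ j ∧ j + 1 ≤ m then MvPolynomial.X (⟨m, (j, i)⟩ : ENidx) else 0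

/-- The entries `s^{(j)}_{r; i_1,…,i_r}` of the differentials of the
Eagon–Northcott complex of the `2×f` matrix with rows `x`, `x'`:
for `r = 2`, `s^{(1)}_{2; i_1, i_2} = x_{i_1} x'_{i_2} − x'_{i_1} x_{i_2}`, and
for `r ≥ 3`,
`s^{(j)}_{r; i} = Σ_u (−1)^{u−1} (x_{i_u} Z^{(j)}_{r−1; i∖i_u} + x'_{i_u} Z^{(j−1)}_{r−1; i∖i_u})`. -/
def sEN (R : Type) [CommRing R] (x x' : ℕ → R) :
    (r : ℕ) → ℕ → (Fin r → ℕ) → MvPolynomial ENidx R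
  | 0, _, _ => 0
  | 1, _, _ => 0
  | 2, j, i =>
      if j = 1 then MvPolynomial.C (x (i 0) * x' (i 1) - x' (i 0) * x (i 1)) else 0
  | (m + 3), j, i =>
      ∑ u : Fin (m + 3), (-1 : MvPolynomial ENidx R) ^ (u : ℕ) *
        (MvPolynomial.C (x (i u)) * Zt R (m + 2) j (i ∘ u.succAbove)
          + MvPolynomial.C (x' (i u)) * Zt R (m + 2) (j - 1) (i ∘ u.succAbove))

end Stmt8

namespace Fin

/-- The involution `(u, v) ↦ (u.succAbove v, v.predAbove u)` pairs off terms of opposite sign. -/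
theorem sum_sum_neg_one_pow_smul_succAbove_eq_zero {M : Type*} [AddCommGroup M] {n : ℕ}
    (G : Fin (n + 2) → Fin (n + 2) → (Fin n → Fin (n + 2)) → M)
    (hG : ∀ a b e, G a b e = G b a e) :
    ∑ u : Fin (n + 2), ∑ v : Fin (n + 1),
      (-1 : ℤ) ^ ((u : ℕ) + v) • G u (u.succAbove v) (u.succAbove ∘ v.succAbove) = 0 := by
  rw [← Finset.sum_product']
  refine Finset.sum_ninvolution (fun p => (p.1.succAbove p.2, p.2.predAbove p.1)) ?_ ?_
    (fun _ => Finset.mem_univ _) ?_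
  · rintro ⟨u, v⟩
    have hcomp : (u.succAbove v).succAbove ∘ (v.predAbove u).succAbove =
        u.succAbove ∘ v.succAbove :=
      funext (succAbove_succAbove_succAbove_predAbove u v)
    dsimp only
    rw [succAbove_succAbove_predAbove, hcomp, neg_one_pow_succAbove_add_predAbove, hG, neg_smul,
      add_neg_cancel]
  · rintro ⟨u, v⟩ - h
    exact (Prod.ext_iff.not.mpr (not_and_of_not_left _ (succAbove_ne u v))) h
  · rintro ⟨u, v⟩
    exact Prod.ext (succAbove_succAbove_predAbove u v) (predAbove_predAbove_succAbove u v)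

end Fin

namespace Stmt8

open MvPolynomial

section EagonNorthcott

variable {ι A B : Type*} [CommRing A] [CommRing B]

def enDiff (x x' : ι → A) {n : ℕ} (F : ℕ → (Fin n → ι) → A) : ℕ → (Fin (n + 1) → ι) → A :=
  fun j i => ∑ u : Fin (n + 1), (-1 : A) ^ (u : ℕ) *
    (x (i u) * F j (i ∘ u.succAbove) + x' (i u) * F (j - 1) (i ∘ u.succAbove))

theorem enDiff_enDiff (x x' : ι → A) {n : ℕ} (F : ℕ → (Fin n → ι) → A) :
    enDiff x x' (enDiff x x' F) = 0 := by
  funext j i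
  let G : Fin (n + 2) → Fin (n + 2) → (Fin n → Fin (n + 2)) → A := fun a b e =>
    x (i a) * x (i b) * F j (i ∘ e) +
      (x (i a) * x' (i b) + x' (i a) * x (i b)) * F (j - 1) (i ∘ e) +
      x' (i a) * x' (i b) * F (j - 1 - 1) (i ∘ e)
  have hG : ∀ a b e, G a b e = G b a e := fun a b e => by ring
  rw [Pi.zero_apply, Pi.zero_apply, ← Fin.sum_sum_neg_one_pow_smul_succAbove_eq_zero G hG]
  refine Finset.sum_congr rfl fun u _ => ?_
  simp only [enDiff, Finset.mul_sum, ← Finset.sum_add_distrib]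
  refine Finset.sum_congr rfl fun v _ => ?_
  simp only [G, zsmul_eq_mul, Function.comp_assoc, Function.comp_apply]
  push_cast
  ring

theorem map_enDiff {F' : Type*} [FunLike F' A B] [RingHomClass F' A B] (φ : F')
    (x x' : ι → A) {n : ℕ} (F : ℕ → (Fin n → ι) → A) (j : ℕ) (i : Fin (n + 1) → ι) :
    φ (enDiff x x' F j i) = enDiff (φ ∘ x) (φ ∘ x') (fun j i => φ (F j i)) j i := by
  simp only [enDiff, map_sum, map_mul, map_add, map_pow, map_neg, map_one, Function.comp_apply]

end EagonNorthcott

section Substitution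

variable (R : Type) [CommRing R] (x x' : ℕ → R)

theorem sEN_add_three (m : ℕ) :
    sEN R x x' (m + 3) = enDiff (C ∘ x) (C ∘ x') (Zt R (m + 2)) :=
  rfl

theorem sEN_two :
    sEN R x x' 2 =
      enDiff (C ∘ x) (C ∘ x') fun j (k : Fin 1 → ℕ) => if j = 1 then C (x' (k 0)) else 0 := by
  funext j i
  simp only [sEN, enDiff]
  split_ifs <;> simp <;> ring

theorem exists_sEN_eq_enDiff (n : ℕ) :
    ∃ G : ℕ → (Fin (n + 1) → ℕ) → MvPolynomial ENidx R,
      sEN R x x' (n + 2) = enDiff (C ∘ x) (C ∘ x') G := by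
  rcases n with _ | m
  · exact ⟨_, sEN_two R x x'⟩
  · exact ⟨_, sEN_add_three R x x' m⟩

theorem sEN_eq_zero_of_out_of_range (m j : ℕ) (i : Fin m → ℕ) (h : ¬ (1 ≤ j ∧ j + 1 ≤ m)) :
    sEN R x x' m j i = 0 := by
  match m with
  | 0 => rfl
  | 1 => rfl
  | 2 => rw [sEN, if_neg (by omega)]
  | m + 3 =>
    refine Finset.sum_eq_zero fun u _ => ?_
    rw [Zt, if_neg (by omega), Zt, if_neg (by omega)]
    ring

theorem bind₁_Zt (m j : ℕ) (i : Fin m → ℕ) :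
    bind₁ (fun v : ENidx => sEN R x x' v.1 v.2.1 v.2.2) (Zt R m j i) = sEN R x x' m j i := by
  rw [Zt]
  split_ifs with h
  · rw [bind₁_X_right]
  · rw [map_zero, sEN_eq_zero_of_out_of_range R x x' m j i h]

theorem bind₁_sEN_add_three (m j : ℕ) (i : Fin (m + 3) → ℕ) :
    bind₁ (fun v : ENidx => sEN R x x' v.1 v.2.1 v.2.2) (sEN R x x' (m + 3) j i) =
      enDiff (C ∘ x) (C ∘ x') (sEN R x x' (m + 2)) j i := by
  rw [sEN_add_three, map_enDiff]
  simp only [Function.comp_def, bind₁_C_right, bind₁_Zt]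

end Substitution

theorem syzygy_distinguisher_stmt8_general
    (R : Type) [CommRing R] (x x' : ℕ → R)
    (r : ℕ) (hr : 3 ≤ r)
    (j : ℕ)
    (i : Fin r → ℕ) :
    MvPolynomial.bind₁ (fun v : ENidx => sEN R x x' v.1 v.2.1 v.2.2)
      (sEN R x x' r j i) = 0 := by
  obtain ⟨m, rfl⟩ : ∃ m, r = m + 3 := ⟨r - 3, by omega⟩
  obtain ⟨G, hG⟩ := exists_sEN_eq_enDiff R x x' m
  rw [bind₁_sEN_add_three, hG, enDiff_enDiff, Pi.zero_apply, Pi.zero_apply]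

/-- Substituting each variable `Z^{(j')}_{r−1; i'}` by the value
`s^{(j')}_{r−1; i'}` in `s^{(j)}_{r; i_1,…,i_r}` yields `0`: consecutive
differentials of the Eagon–Northcott complex compose to zero. -/
theorem syzygy_distinguisher_stmt8
    (R : Type) [CommRing R] (f : ℕ) (hf : 3 ≤ f) (x x' : ℕ → R)
    (r : ℕ) (hr : 3 ≤ r) (hrf : r ≤ f)
    (j : ℕ) (hj1 : 1 ≤ j) (hj2 : j ≤ r - 1)
    (i : Fin r → ℕ) (hmono : StrictMono i) (hrange : ∀ u, 1 ≤ i u ∧ i u ≤ f) :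
    MvPolynomial.bind₁ (fun v : ENidx => sEN R x x' v.1 v.2.1 v.2.2)
      (sEN R x x' r j i) = 0 :=
  syzygy_distinguisher_stmt8_general R x x' r hr j i

end Stmt8
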